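/- arXiv:0910.1727 — 2 statements merged into one kernel-verified Lean document; each statement's English description precedes it below -/
import Mathlib

section
/- With notation as above (σ = θ·ς₁·ω^d(ς₂) with ς₁, ς₂ ∈ S_d), the pair of permutations σ, ω^d(σ) (in S_{3d}) satisfies the braid relation σ·ω^d(σ)·σ = ω^d(σ)·σ·ω^d(σ) if and only if ς₁ and ς₂ commute. -/
/-!
Write `σ = θ·ς₁·ω^d(ς₂)`. On the blocks `[0,d)`, `[d,2d)`, `[2d,∞)` it acts by
`k ↦ ς₁ k + d`, `k + d ↦ ς₂ k` and the identity, and `ω^d(σ)` is the same pattern one block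
higher. Evaluating both sides of the braid relation block by block, they agree everywhere
except possibly on `[d,2d)`, where they send `k + d` to `ς₁ (ς₂ k) + d` and `ς₂ (ς₁ k) + d`
respectively.
-/

/-- The shift of a permutation of `ℕ` up by `d`: fixes `{0,…,d-1}` and acts as `σ`
conjugated by `k ↦ k + d` above. -/
def shift (d : ℕ) (σ : Equiv.Perm ℕ) : Equiv.Perm ℕ where
  toFun k := if k < d then k else σ (k - d) + d
  invFun k := if k < d then k else σ⁻¹ (k - d) + d
  left_inv k := by
    by_cases h : k < d
    · simp [h]
    · dsimp only
      rw [if_neg h, if_neg (by omega), Nat.add_sub_cancel, Equiv.Perm.coe_inv, Equiv.symm_apply_apply]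
      omega
  right_inv k := by
    by_cases h : k < d
    · simp [h]
    · dsimp only
      rw [if_neg h, if_neg (by omega), Nat.add_sub_cancel, Equiv.Perm.coe_inv, Equiv.apply_symm_apply]
      omega

/-- The involution of `ℕ` swapping the blocks `{0,…,d-1}` and `{d,…,2d-1}`. -/
def theta (d : ℕ) : Equiv.Perm ℕ :=
  Function.Involutive.toPerm
    (fun k => if k < d then k + d else if k < 2 * d then k - d else k)
    (by intro k; dsimp only; split_ifs <;> omega)

open Equiv

namespace Equiv.Perm

theorem apply_lt_of_forall_le_imp_apply_eq {d : ℕ} {π : Perm ℕ} (h : ∀ k, d ≤ k → π k = k)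
    {k : ℕ} (hk : k < d) : π k < d := by
  by_contra! hge
  have := π.injective (h _ hge)
  omega

theorem mul_comm_iff_of_forall_le_imp_apply_eq {d : ℕ} {ς₁ ς₂ : Perm ℕ}
    (h₁ : ∀ k, d ≤ k → ς₁ k = k) (h₂ : ∀ k, d ≤ k → ς₂ k = k) :
    ς₁ * ς₂ = ς₂ * ς₁ ↔ ∀ k < d, ς₁ (ς₂ k) = ς₂ (ς₁ k) := by
  refine ⟨fun h k _ => congr($h k), fun h => Perm.ext fun k => ?_⟩
  rcases lt_or_ge k d with hk | hk
  · exact h k hk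
  · simp only [Perm.mul_apply, h₂ k hk, h₁ k hk]

end Equiv.Perm

open Equiv.Perm

theorem shift_apply_of_lt {d k : ℕ} (σ : Perm ℕ) (hk : k < d) : shift d σ k = k :=
  if_pos hk

theorem shift_apply_add (d k : ℕ) (σ : Perm ℕ) : shift d σ (k + d) = σ k + d := by
  change (if k + d < d then k + d else σ (k + d - d) + d) = σ k + d
  rw [if_neg (by omega), Nat.add_sub_cancel]

theorem shift_apply_of_le {d k : ℕ} (σ : Perm ℕ) (hk : d ≤ k) : shift d σ k = σ (k - d) + d := by
  obtain ⟨j, rfl⟩ := Nat.exists_eq_add_of_le' hk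
  rw [shift_apply_add, Nat.add_sub_cancel]

theorem theta_apply (d k : ℕ) :
    theta d k = if k < d then k + d else if k < 2 * d then k - d else k :=
  rfl

theorem theta_apply_of_lt {d k : ℕ} (hk : k < d) : theta d k = k + d := by
  rw [theta_apply, if_pos hk]

theorem theta_apply_add {d k : ℕ} (hk : k < d) : theta d (k + d) = k := by
  rw [theta_apply, if_neg (by omega), if_pos (by omega), Nat.add_sub_cancel]

theorem theta_apply_of_le {d k : ℕ} (hk : 2 * d ≤ k) : theta d k = k := by
  rw [theta_apply, if_neg (by omega), if_neg (by omega)]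

def thetaMulShift (d : ℕ) (ς₁ ς₂ : Perm ℕ) : Perm ℕ :=
  theta d * ς₁ * shift d ς₂

section Blocks

variable {d k : ℕ} {ς₁ ς₂ : Perm ℕ}

theorem thetaMulShift_apply_of_lt (h₁ : ∀ k, d ≤ k → ς₁ k = k) (hk : k < d) :
    thetaMulShift d ς₁ ς₂ k = ς₁ k + d := by
  rw [thetaMulShift, Perm.mul_apply, Perm.mul_apply, shift_apply_of_lt _ hk,
    theta_apply_of_lt (apply_lt_of_forall_le_imp_apply_eq h₁ hk)]

theorem thetaMulShift_apply_add (h₁ : ∀ k, d ≤ k → ς₁ k = k) (h₂ : ∀ k, d ≤ k → ς₂ k = k)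
    (hk : k < d) : thetaMulShift d ς₁ ς₂ (k + d) = ς₂ k := by
  rw [thetaMulShift, Perm.mul_apply, Perm.mul_apply, shift_apply_add, h₁ _ (by omega),
    theta_apply_add (apply_lt_of_forall_le_imp_apply_eq h₂ hk)]

theorem thetaMulShift_apply_of_le (h₁ : ∀ k, d ≤ k → ς₁ k = k) (h₂ : ∀ k, d ≤ k → ς₂ k = k)
    (hk : 2 * d ≤ k) : thetaMulShift d ς₁ ς₂ k = k := by
  rw [thetaMulShift, Perm.mul_apply, Perm.mul_apply, shift_apply_of_le _ (by omega),
    h₂ _ (by omega), Nat.sub_add_cancel (by omega), h₁ _ (by omega), theta_apply_of_le hk]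

end Blocks

section Braid

variable {d k : ℕ} {ς₁ ς₂ : Perm ℕ}

local notation "σ" => thetaMulShift d ς₁ ς₂

theorem thetaMulShift_braid_apply_of_lt (h₁ : ∀ k, d ≤ k → ς₁ k = k)
    (h₂ : ∀ k, d ≤ k → ς₂ k = k) (hk : k < d) :
    (σ * shift d σ * σ) k = (shift d σ * σ * shift d σ) k := by
  have hk₁ := apply_lt_of_forall_le_imp_apply_eq h₁ hk
  simp only [Perm.mul_apply]
  rw [shift_apply_of_lt _ hk, thetaMulShift_apply_of_lt h₁ hk, shift_apply_add,
    thetaMulShift_apply_of_lt h₁ hk₁, thetaMulShift_apply_of_le h₁ h₂ (by omega)]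

theorem thetaMulShift_braid_lhs_apply_add (h₁ : ∀ k, d ≤ k → ς₁ k = k)
    (h₂ : ∀ k, d ≤ k → ς₂ k = k) (hk : k < d) : (σ * shift d σ * σ) (k + d) = ς₁ (ς₂ k) + d := by
  have hk₂ := apply_lt_of_forall_le_imp_apply_eq h₂ hk
  simp only [Perm.mul_apply]
  rw [thetaMulShift_apply_add h₁ h₂ hk, shift_apply_of_lt _ hk₂,
    thetaMulShift_apply_of_lt h₁ hk₂]

theorem thetaMulShift_braid_rhs_apply_add (h₁ : ∀ k, d ≤ k → ς₁ k = k)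
    (h₂ : ∀ k, d ≤ k → ς₂ k = k) (hk : k < d) :
    (shift d σ * σ * shift d σ) (k + d) = ς₂ (ς₁ k) + d := by
  have hk₁ := apply_lt_of_forall_le_imp_apply_eq h₁ hk
  simp only [Perm.mul_apply]
  rw [shift_apply_add, thetaMulShift_apply_of_lt h₁ hk,
    thetaMulShift_apply_of_le h₁ h₂ (by omega), shift_apply_add,
    thetaMulShift_apply_add h₁ h₂ hk₁]

theorem thetaMulShift_braid_apply_add_add (h₁ : ∀ k, d ≤ k → ς₁ k = k)
    (h₂ : ∀ k, d ≤ k → ς₂ k = k) (hk : k < d) :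
    (σ * shift d σ * σ) (k + d + d) = (shift d σ * σ * shift d σ) (k + d + d) := by
  have hk₂ := apply_lt_of_forall_le_imp_apply_eq h₂ hk
  simp only [Perm.mul_apply]
  rw [thetaMulShift_apply_of_le h₁ h₂ (k := k + d + d) (by omega), shift_apply_add,
    thetaMulShift_apply_add h₁ h₂ hk, thetaMulShift_apply_add h₁ h₂ hk₂,
    shift_apply_of_lt _ (apply_lt_of_forall_le_imp_apply_eq h₂ hk₂)]

theorem thetaMulShift_braid_apply_of_le (h₁ : ∀ k, d ≤ k → ς₁ k = k)
    (h₂ : ∀ k, d ≤ k → ς₂ k = k) (hk : 3 * d ≤ k) :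
    (σ * shift d σ * σ) k = (shift d σ * σ * shift d σ) k := by
  have hσ : σ k = k := thetaMulShift_apply_of_le h₁ h₂ (by omega)
  have hτ : shift d σ k = k := by
    rw [shift_apply_of_le _ (by omega), thetaMulShift_apply_of_le h₁ h₂ (by omega),
      Nat.sub_add_cancel (by omega)]
  simp only [Perm.mul_apply, hσ, hτ]

theorem thetaMulShift_braid_iff (h₁ : ∀ k, d ≤ k → ς₁ k = k) (h₂ : ∀ k, d ≤ k → ς₂ k = k) :
    σ * shift d σ * σ = shift d σ * σ * shift d σ ↔ ∀ k < d, ς₁ (ς₂ k) = ς₂ (ς₁ k) := by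
  constructor
  · intro h k hk
    have := congr($h (k + d))
    rwa [thetaMulShift_braid_lhs_apply_add h₁ h₂ hk, thetaMulShift_braid_rhs_apply_add h₁ h₂ hk,
      add_left_inj] at this
  · intro h
    ext k
    rcases lt_or_ge k d with hk | hk
    · exact thetaMulShift_braid_apply_of_lt h₁ h₂ hk
    obtain ⟨k, rfl⟩ := Nat.exists_eq_add_of_le' hk
    rcases lt_or_ge k d with hk | hk
    · rw [thetaMulShift_braid_lhs_apply_add h₁ h₂ hk, thetaMulShift_braid_rhs_apply_add h₁ h₂ hk,
        h k hk]
    obtain ⟨k, rfl⟩ := Nat.exists_eq_add_of_le' hk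
    rcases lt_or_ge k d with hk | hk
    · exact thetaMulShift_braid_apply_add_add h₁ h₂ hk
    · exact thetaMulShift_braid_apply_of_le h₁ h₂ (by omega)

end Braid

theorem stmt_4_general (d : ℕ) (ς₁ ς₂ : Equiv.Perm ℕ)
    (h₁ : ∀ k, d ≤ k → ς₁ k = k) (h₂ : ∀ k, d ≤ k → ς₂ k = k)
    (σ : Equiv.Perm ℕ) (hσ : σ = theta d * ς₁ * shift d ς₂) :
    σ * shift d σ * σ = shift d σ * σ * shift d σ ↔ ς₁ * ς₂ = ς₂ * ς₁ := by
  subst hσ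
  exact (thetaMulShift_braid_iff h₁ h₂).trans (mul_comm_iff_of_forall_le_imp_apply_eq h₁ h₂).symm

/-- For `σ = θ·ς₁·ω^d(ς₂)` with `ς₁, ς₂` permutations of `{0,…,d-1}`, the pair
`σ`, `ω^d(σ)` satisfies the braid relation iff `ς₁` and `ς₂` commute. -/
theorem stmt_4 (d : ℕ) (hd : 2 ≤ d) (ς₁ ς₂ : Equiv.Perm ℕ)
    (h₁ : ∀ k, d ≤ k → ς₁ k = k) (h₂ : ∀ k, d ≤ k → ς₂ k = k)
    (σ : Equiv.Perm ℕ) (hσ : σ = theta d * ς₁ * shift d ς₂) :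
    σ * shift d σ * σ = shift d σ * σ * shift d σ ↔ ς₁ * ς₂ = ς₂ * ς₁ :=
  stmt_4_general d ς₁ ς₂ h₁ h₂ σ hσ
end

section
/- With the hypotheses of the main theorem (τ of order q, n ≥ 3), the conjugation action of S_n ≅ B_n(σ)/A_n(σ) on A_n(σ) ≅ (ℤ/qℤ)^{n-1} × ℤ/(q/gcd(q,2))ℤ defines an injective group homomorphism m: S_n → Aut(A_n(σ)), provided q ≥ 3. -/
open Equiv Subgroup

namespace BlockPerm

theorem shift_apply (m : ℕ) (x : Perm ℕ) (k : ℕ) :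
    shift m x k = if k < m then k else x (k - m) + m := rfl

def shiftHom (m : ℕ) : Perm ℕ →* Perm ℕ where
  toFun := shift m
  map_one' := by ext k; simp only [shift_apply, Perm.one_apply]; split_ifs <;> omega
  map_mul' x y := by
    ext k
    simp only [shift_apply, Perm.mul_apply]
    by_cases h : k < m
    · simp [h]
    · rw [if_neg h, if_neg h, if_neg (by omega : ¬ y (k - m) + m < m), Nat.add_sub_cancel]

theorem shift_mul (m : ℕ) (x y : Perm ℕ) : shift m (x * y) = shift m x * shift m y :=
  (shiftHom m).map_mul x y

theorem shift_pow (m : ℕ) (x : Perm ℕ) (k : ℕ) : shift m (x ^ k) = shift m x ^ k :=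
  (shiftHom m).map_pow x k

theorem shift_shift (a b : ℕ) (x : Perm ℕ) : shift a (shift b x) = shift (a + b) x := by
  ext k
  simp only [shift_apply]
  by_cases h : k < a
  · rw [if_pos h, if_pos (by omega)]
  · by_cases h' : k - a < b
    · rw [if_neg h, if_pos h', if_pos (by omega)]; omega
    · rw [if_neg h, if_neg h', if_neg (by omega), Nat.sub_sub]; omega

theorem shift_swap (m a b : ℕ) : shift m (swap a b) = swap (a + m) (b + m) := by
  ext k
  simp only [shift_apply]
  by_cases h : k < m
  · rw [if_pos h, swap_apply_of_ne_of_ne (by omega) (by omega)]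
  · rw [if_neg h, swap_apply_def, swap_apply_def]
    split_ifs <;> omega

abbrev fixingFrom (d : ℕ) : Subgroup (Perm ℕ) := fixingSubgroup (Perm ℕ) (Set.Ici d)

theorem mem_fixingFrom {d : ℕ} {x : Perm ℕ} : x ∈ fixingFrom d ↔ ∀ k, d ≤ k → x k = k := by
  simp only [mem_fixingSubgroup_iff, Set.mem_Ici, Perm.smul_def]

theorem apply_lt_of_mem_fixingFrom {d r : ℕ} {x : Perm ℕ} (hx : x ∈ fixingFrom d)
    (hr : r < d) : x r < d := by
  by_contra h
  have := x.injective (mem_fixingFrom.1 hx (x r) (not_lt.1 h))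
  omega

theorem mul_add_div_of_lt {a d r : ℕ} (hr : r < d) : (a * d + r) / d = a := by
  rw [Nat.add_comm, Nat.add_mul_div_right _ _ (by omega), Nat.div_eq_of_lt hr, Nat.zero_add]

section Blocks

variable {d : ℕ} [NeZero d]

theorem exists_mul_add_eq (p : ℕ) : ∃ a r, r < d ∧ a * d + r = p :=
  ⟨p / d, p % d, Nat.mod_lt _ (NeZero.pos d), Nat.div_add_mod' p d⟩

variable (d)

def blockPerm : Perm ℕ →* Perm ℕ where
  toFun w :=
    { toFun := fun p => w (p / d) * d + p % d
      invFun := fun p => w⁻¹ (p / d) * d + p % d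
      left_inv := fun p => by
        simp [mul_add_div_of_lt (Nat.mod_lt p (NeZero.pos d)), Nat.div_add_mod']
      right_inv := fun p => by
        simp [mul_add_div_of_lt (Nat.mod_lt p (NeZero.pos d)), Nat.div_add_mod'] }
  map_one' := by ext p; simp [Nat.div_add_mod']
  map_mul' w w' := by
    ext p
    simp [mul_add_div_of_lt (Nat.mod_lt p (NeZero.pos d))]

def blockDiag : (ℕ → fixingFrom d) →* Perm ℕ where
  toFun f :=
    { toFun := fun p => p / d * d + (f (p / d) : Perm ℕ) (p % d)
      invFun := fun p => p / d * d + ((f (p / d))⁻¹ : Perm ℕ) (p % d)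
      left_inv := fun p => by
        have hr := Nat.mod_lt p (NeZero.pos d)
        simp [mul_add_div_of_lt (apply_lt_of_mem_fixingFrom (f (p / d)).2 hr),
          Nat.mul_add_mod_of_lt (apply_lt_of_mem_fixingFrom (f (p / d)).2 hr), Nat.div_add_mod']
      right_inv := fun p => by
        have hr : (f (p / d) : Perm ℕ).symm (p % d) < d :=
          apply_lt_of_mem_fixingFrom (f (p / d))⁻¹.2 (Nat.mod_lt p (NeZero.pos d))
        simp [mul_add_div_of_lt hr, Nat.mul_add_mod_of_lt hr, Nat.div_add_mod'] }
  map_one' := by ext p; simp [Nat.div_add_mod']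
  map_mul' f g := by
    ext p
    have hr := Nat.mod_lt p (NeZero.pos d)
    simp [mul_add_div_of_lt (apply_lt_of_mem_fixingFrom (g (p / d)).2 hr),
      Nat.mul_add_mod_of_lt (apply_lt_of_mem_fixingFrom (g (p / d)).2 hr)]

variable {d}

theorem blockPerm_apply_mul_add (w : Perm ℕ) (a : ℕ) {r : ℕ} (hr : r < d) :
    blockPerm d w (a * d + r) = w a * d + r := by
  simp [blockPerm, mul_add_div_of_lt hr, Nat.mul_add_mod_of_lt hr]

theorem blockDiag_apply_mul_add (f : ℕ → fixingFrom d) (a : ℕ) {r : ℕ} (hr : r < d) :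
    blockDiag d f (a * d + r) = a * d + (f a : Perm ℕ) r := by
  simp [blockDiag, mul_add_div_of_lt hr, Nat.mul_add_mod_of_lt hr]

theorem blockDiag_injective : Function.Injective (blockDiag d) := by
  intro f g h
  funext a
  ext r
  by_cases hr : r < d
  · simpa [blockDiag_apply_mul_add _ _ hr] using DFunLike.congr_fun h (a * d + r)
  · rw [mem_fixingFrom.1 (f a).2 r (by omega), mem_fixingFrom.1 (g a).2 r (by omega)]

theorem shift_mul_eq_blockDiag (x : fixingFrom d) (k : ℕ) :
    shift (k * d) x = blockDiag d (Pi.mulSingle k x) := by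
  ext p
  obtain ⟨a, r, hr, rfl⟩ := exists_mul_add_eq (d := d) p
  rw [blockDiag_apply_mul_add _ _ hr, shift_apply]
  rcases lt_trichotomy a k with h | rfl | h
  · have : (a + 1) * d ≤ k * d := Nat.mul_le_mul_right _ h
    rw [add_one_mul] at this
    rw [if_pos (by omega), Pi.mulSingle_eq_of_ne h.ne]
    rfl
  · rw [if_neg (by omega), Nat.add_sub_cancel_left, Pi.mulSingle_eq_same]
    omega
  · have : (k + 1) * d ≤ a * d := Nat.mul_le_mul_right _ h
    rw [add_one_mul] at this
    rw [if_neg (by omega), Pi.mulSingle_eq_of_ne h.ne', mem_fixingFrom.1 x.2 _ (by omega)]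
    simp only [OneMemClass.coe_one, Perm.one_apply]
    omega

theorem blockPerm_mul_blockDiag (w : Perm ℕ) (f : ℕ → fixingFrom d) :
    blockPerm d w * blockDiag d f = blockDiag d (fun k => f (w⁻¹ k)) * blockPerm d w := by
  ext p
  obtain ⟨a, r, hr, rfl⟩ := exists_mul_add_eq (d := d) p
  simp [blockDiag_apply_mul_add _ _ hr, blockPerm_apply_mul_add _ _ hr,
    blockPerm_apply_mul_add _ _ (apply_lt_of_mem_fixingFrom (f a).2 hr)]

theorem semiconjBy_blockPerm_shift (w : Perm ℕ) (x : fixingFrom d) (k : ℕ) :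
    SemiconjBy (blockPerm d w) (shift (k * d) x) (shift (w k * d) x) := by
  unfold SemiconjBy
  rw [shift_mul_eq_blockDiag, shift_mul_eq_blockDiag, blockPerm_mul_blockDiag]
  congr 2
  funext i
  by_cases hi : i = w k
  · simp [hi]
  · rw [Pi.mulSingle_eq_of_ne hi, Pi.mulSingle_eq_of_ne]
    rintro rfl
    simp at hi

theorem shift_blockPerm (m : ℕ) (w : Perm ℕ) :
    shift (m * d) (blockPerm d w) = blockPerm d (shift m w) := by
  ext p
  obtain ⟨a, r, hr, rfl⟩ := exists_mul_add_eq (d := d) p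
  rw [blockPerm_apply_mul_add _ _ hr, shift_apply, shift_apply]
  by_cases h : a < m
  · have : (a + 1) * d ≤ m * d := Nat.mul_le_mul_right _ h
    rw [add_one_mul] at this
    rw [if_pos (by omega), if_pos h]
  · have hma : m * d ≤ a * d := Nat.mul_le_mul_right _ (not_lt.1 h)
    have : a * d + r - m * d = (a - m) * d + r := by rw [Nat.sub_mul]; omega
    rw [if_neg (by omega), if_neg h, this, blockPerm_apply_mul_add _ _ hr, add_mul]
    omega

theorem theta_eq_blockPerm : theta d = blockPerm d (swap 0 1) := by
  ext p
  obtain ⟨a, r, hr, rfl⟩ := exists_mul_add_eq (d := d) p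
  rw [blockPerm_apply_mul_add _ _ hr]
  show (if a * d + r < d then a * d + r + d else
    if a * d + r < 2 * d then a * d + r - d else a * d + r) = _
  rcases Nat.lt_or_ge a 2 with h | h
  · interval_cases a <;> simp [hr] <;> omega
  · have : 2 * d ≤ a * d := Nat.mul_le_mul_right _ h
    rw [swap_apply_of_ne_of_ne (by omega) (by omega), if_neg (by omega), if_neg (by omega)]

theorem commute_blockDiag_shift (f : ℕ → fixingFrom d) (x : fixingFrom d) (k : ℕ)
    (h : Commute (f k) x) : Commute (blockDiag d f) (shift (k * d) x) := by
  rw [shift_mul_eq_blockDiag]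
  refine Commute.map (Pi.commute_iff.2 fun i => ?_) _
  by_cases hi : i = k
  · subst hi; simpa using h
  · simp [hi]

theorem commute_shift_shift (x : fixingFrom d) (i k : ℕ) :
    Commute (shift (i * d) x) (shift (k * d) x) := by
  rw [shift_mul_eq_blockDiag]
  refine commute_blockDiag_shift _ _ _ ?_
  by_cases hk : k = i
  · subst hk; simp
  · simp [hk]

theorem shift_mul_left_injective {x : fixingFrom d} (hx : x ≠ 1) :
    Function.Injective fun a => shift (a * d) (x : Perm ℕ) := by
  intro a b h
  simp only [shift_mul_eq_blockDiag] at h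
  have := congrFun (blockDiag_injective h) a
  by_contra hab
  rw [Pi.mulSingle_eq_same, Pi.mulSingle_eq_of_ne hab] at this
  exact hx this

end Blocks

/-- The subgroup `⟨τ⟩^{(n)}` of the paper, for `x = τ`. -/
def blockTorus (d n : ℕ) (x : Perm ℕ) : Subgroup (Perm ℕ) :=
  closure {y | ∃ k < n, y ∈ zpowers (shift (k * d) x)}

/-- The generators `σ₁, …, σₙ₋₁` of `Bₙ(σ)`. -/
def sigmaGens (d n : ℕ) (σ : Perm ℕ) : Set (Perm ℕ) :=
  {y | ∃ s, 1 ≤ s ∧ s ≤ n - 1 ∧ y = shift ((s - 1) * d) σ}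

theorem shift_mem_blockTorus {d n : ℕ} (x : Perm ℕ) {k : ℕ} (hk : k < n) :
    shift (k * d) x ∈ blockTorus d n x :=
  subset_closure ⟨k, hk, mem_zpowers _⟩

theorem commute_of_mem_blockTorus {d n : ℕ} {x y a : Perm ℕ}
    (hy : ∀ k < n, Commute y (shift (k * d) x)) (ha : a ∈ blockTorus d n x) : Commute y a := by
  suffices blockTorus d n x ≤ centralizer {y} from (mem_centralizer_singleton_iff.1 (this ha)).symm
  refine closure_le _ |>.2 ?_
  rintro _ ⟨k, hk, z, rfl⟩
  exact mem_centralizer_singleton_iff.2 ((hy k hk).zpow_right z).symm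

theorem map_blockPerm_le_normalizer {d : ℕ} [NeZero d] (n : ℕ) (x : fixingFrom d) :
    (fixingFrom n).map (blockPerm d) ≤ normalizer (blockTorus d n x : Set (Perm ℕ)) := by
  rw [blockTorus, le_normalizer_closure_iff]
  rintro _ ⟨w, hw, rfl⟩ _ ⟨k, hk, z, rfl⟩
  refine subset_closure ⟨w k, apply_lt_of_mem_fixingFrom hw hk, z, ?_⟩
  exact (mul_inv_eq_of_eq_mul ((semiconjBy_blockPerm_shift w x k).zpow_right z).eq).symm

section Monodromy

variable {d n : ℕ} [NeZero d] {s₁ s₂ : fixingFrom d}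

theorem commute_blockDiag_pow_shift (hs : Commute s₁ s₂) (k : ℕ) :
    Commute (blockDiag d (s₁ ^ ·)) (shift (k * d) ↑(s₁ * s₂)) :=
  commute_blockDiag_shift _ _ _ (((Commute.refl s₁).mul_right hs).pow_left k)

theorem shift_theta_mul_eq_conj (hs : Commute s₁ s₂) (j : ℕ) :
    shift (j * d) (theta d * s₁ * shift d s₂) =
      blockDiag d (s₁ ^ ·) * (shift (j * d) ↑(s₁ * s₂) * blockPerm d (swap j (j + 1))) *
        (blockDiag d (s₁ ^ ·))⁻¹ := by
  have hσ : shift (j * d) (theta d * s₁ * shift d s₂) = blockPerm d (swap j (j + 1)) *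
      blockDiag d (Pi.mulSingle j s₁ * Pi.mulSingle (j + 1) s₂) := by
    rw [shift_mul, shift_mul, theta_eq_blockPerm, shift_blockPerm, shift_swap, shift_shift,
      ← add_one_mul, shift_mul_eq_blockDiag, shift_mul_eq_blockDiag, map_mul, mul_assoc,
      zero_add, add_comm 1 j]
  rw [hσ, shift_mul_eq_blockDiag, mul_assoc, mul_assoc, ← map_inv]
  simp only [blockPerm_mul_blockDiag]
  rw [← mul_assoc, ← mul_assoc, ← map_mul, ← map_mul]
  congr 2
  funext k
  simp only [swap_inv]
  rcases eq_or_ne k j with rfl | hj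
  · simp only [swap_apply_left, Pi.mul_apply, ne_eq, Nat.add_eq_left, one_ne_zero,
      not_false_eq_true, Pi.mulSingle_eq_of_ne, Pi.mulSingle_eq_same, one_mul, Pi.inv_apply,
      pow_succ, mul_inv_rev]
    rw [hs.eq, mul_assoc (s₁ ^ k), mul_assoc s₂, mul_inv_cancel_left, ← mul_assoc,
      (hs.pow_left k).eq, mul_inv_cancel_right]
  rcases eq_or_ne k (j + 1) with rfl | hj1
  · simp only [swap_apply_right, Pi.mul_apply, Pi.mulSingle_eq_same, ne_eq, Nat.left_eq_add,
      one_ne_zero, not_false_eq_true, Pi.mulSingle_eq_of_ne, mul_one, Pi.inv_apply, pow_succ,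
      Nat.add_eq_left]
    rw [(Commute.pow_self s₁ j).eq, mul_inv_cancel_right]
  · simp [swap_apply_of_ne_of_ne hj hj1, hj, hj1]

theorem shift_theta_mul_sq (hs : Commute s₁ s₂) (j : ℕ) :
    shift (j * d) (theta d * s₁ * shift d s₂) ^ 2 =
      shift (j * d) ↑(s₁ * s₂) * shift ((j + 1) * d) ↑(s₁ * s₂) := by
  have hsq : shift (j * d) ↑(s₁ * s₂) * blockPerm d (swap j (j + 1)) *
      (shift (j * d) ↑(s₁ * s₂) * blockPerm d (swap j (j + 1))) =
      shift (j * d) ↑(s₁ * s₂) * shift ((j + 1) * d) ↑(s₁ * s₂) := by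
    rw [mul_assoc, ← mul_assoc (blockPerm d _), (semiconjBy_blockPerm_shift _ _ j).eq,
      swap_apply_left, mul_assoc, ← map_mul, swap_mul_self, map_one, mul_one]
  rw [shift_theta_mul_eq_conj hs, conj_pow, sq, hsq,
    ((commute_blockDiag_pow_shift hs j).mul_right (commute_blockDiag_pow_shift hs (j + 1))).eq,
    mul_inv_cancel_right]

theorem exists_eq_conj_of_mem_closure_sigmaGens (hs : Commute s₁ s₂) {g : Perm ℕ}
    (hg : g ∈ closure (sigmaGens d n (theta d * s₁ * shift d s₂))) :
    ∃ a ∈ blockTorus d n ↑(s₁ * s₂), ∃ w ∈ fixingFrom n,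
      g = blockDiag d (s₁ ^ ·) * (a * blockPerm d w) * (blockDiag d (s₁ ^ ·))⁻¹ := by
  have hle : closure (sigmaGens d n (theta d * s₁ * shift d s₂)) ≤
      (blockTorus d n ↑(s₁ * s₂) ⊔ (fixingFrom n).map (blockPerm d)).map
        (MulAut.conj (blockDiag d (s₁ ^ ·))).toMonoidHom := by
    refine closure_le _ |>.2 ?_
    rintro _ ⟨s, hs1, hsn, rfl⟩
    obtain ⟨j, rfl⟩ : ∃ j, s = j + 1 := ⟨s - 1, by omega⟩
    have hw : swap j (j + 1) ∈ fixingFrom n :=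
      mem_fixingFrom.2 fun k hk => swap_apply_of_ne_of_ne (by omega) (by omega)
    rw [Nat.add_sub_cancel, shift_theta_mul_eq_conj hs]
    exact ⟨_, mul_mem_sup (shift_mem_blockTorus _ (by omega)) ⟨_, hw, rfl⟩, rfl⟩
  obtain ⟨x, hx, rfl⟩ := hle hg
  rw [coe_mul_of_right_le_normalizer_left _ _ (map_blockPerm_le_normalizer n _)] at hx
  obtain ⟨a, ha, _, ⟨w, hw, rfl⟩, rfl⟩ := hx
  exact ⟨a, ha, w, hw, rfl⟩

theorem semiconjBy_conj_shift (hs : Commute s₁ s₂) {a : Perm ℕ}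
    (ha : a ∈ blockTorus d n ↑(s₁ * s₂)) (w : Perm ℕ) (j : ℕ) :
    SemiconjBy (blockDiag d (s₁ ^ ·) * (a * blockPerm d w) * (blockDiag d (s₁ ^ ·))⁻¹)
      (shift (j * d) ↑(s₁ * s₂)) (shift (w j * d) ↑(s₁ * s₂)) :=
  .mul_left (.mul_left (commute_blockDiag_pow_shift hs (w j))
      (.mul_left (commute_of_mem_blockTorus (fun k _ => commute_shift_shift _ _ k) ha).symm
        (semiconjBy_blockPerm_shift w _ j)))
    (commute_blockDiag_pow_shift hs j).inv_left

theorem shift_mul_shift_mem_closure (hs : Commute s₁ s₂) {j k : ℕ} (hjk : j < k) (hk : k < n) :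
    shift (j * d) ↑(s₁ * s₂) * shift (k * d) ↑(s₁ * s₂) ∈
      closure (sigmaGens d n (theta d * s₁ * shift d s₂)) := by
  have hgen : ∀ i, i + 1 < n → shift (i * d) (theta d * s₁ * shift d s₂) ∈
      closure (sigmaGens d n (theta d * s₁ * shift d s₂)) :=
    fun i hi => subset_closure ⟨i + 1, by omega, by omega, by rw [Nat.add_sub_cancel]⟩
  induction k, hjk using Nat.le_induction with
  | base => exact shift_theta_mul_sq hs j ▸ pow_mem (hgen j hk) 2
  | succ k hjk ih =>
    have hconj := semiconjBy_conj_shift hs (shift_mem_blockTorus _ (by omega : k < n))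
      (swap k (k + 1))
    rw [← shift_theta_mul_eq_conj hs] at hconj
    have h := (hconj j).mul_right (hconj k)
    rw [swap_apply_of_ne_of_ne (by omega) (by omega), swap_apply_left] at h
    rw [← mul_inv_eq_of_eq_mul h.eq]
    exact mul_mem (mul_mem (hgen k hk) (ih (by omega))) (inv_mem (hgen k hk))

theorem shift_sq_mem_closure (hs : Commute s₁ s₂) (hn : 3 ≤ n) {j : ℕ} (hj : j < n) :
    shift (j * d) ↑(s₁ * s₂) ^ 2 ∈ closure (sigmaGens d n (theta d * s₁ * shift d s₂)) := by
  have hpair : ∀ i k, i ≠ k → i < n → k < n → shift (i * d) ↑(s₁ * s₂) *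
      shift (k * d) ↑(s₁ * s₂) ∈ closure (sigmaGens d n (theta d * s₁ * shift d s₂)) := by
    intro i k hik hi hk
    rcases hik.lt_or_gt with h | h
    · exact shift_mul_shift_mem_closure hs h hk
    · rw [(commute_shift_shift _ i k).eq]
      exact shift_mul_shift_mem_closure hs h hi
  -- `j, k, l` are distinct and `k, l < 3 ≤ n`
  set k := (j + 1) % 3
  set l := (j + 2) % 3
  have hsq : shift (j * d) ↑(s₁ * s₂) ^ 2 =
      shift (j * d) ↑(s₁ * s₂) * shift (k * d) ↑(s₁ * s₂) *
        (shift (j * d) ↑(s₁ * s₂) * shift (l * d) ↑(s₁ * s₂)) *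
        (shift (k * d) ↑(s₁ * s₂) * shift (l * d) ↑(s₁ * s₂))⁻¹ := by
    rw [sq, (commute_shift_shift _ k j).mul_mul_mul_comm, mul_inv_cancel_right]
  rw [hsq]
  exact mul_mem (mul_mem (hpair j k (by omega) hj (by omega)) (hpair j l (by omega) hj (by omega)))
    (inv_mem (hpair k l (by omega) (by omega) (by omega)))

theorem eq_of_semiconjBy_shift {g : Perm ℕ} {x : fixingFrom d} (hx : x ^ 2 ≠ 1) {i j : ℕ}
    (hsc : SemiconjBy g (shift (j * d) x) (shift (i * d) x))
    (hg : g * shift (j * d) x ^ 2 * g⁻¹ = shift (j * d) x ^ 2) : i = j := by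
  refine shift_mul_left_injective hx ?_
  simp only [coe_pow, shift_pow]
  exact (mul_inv_eq_of_eq_mul (hsc.pow_right 2).eq).symm.trans hg

end Monodromy

end BlockPerm

open BlockPerm

/-- Injectivity of `m : Sₙ → Aut(Aₙ(σ))`, i.e. the centraliser of `Aₙ(σ)` in `Bₙ(σ)` is `Aₙ(σ)`. -/
theorem stmt_19 (d n : ℕ) (hd : 2 ≤ d) (hn : 3 ≤ n) (ς₁ ς₂ τ : Equiv.Perm ℕ)
    (h₁ : ∀ k, d ≤ k → ς₁ k = k) (h₂ : ∀ k, d ≤ k → ς₂ k = k)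
    (hτ : ς₁ * ς₂ = τ) (hτ' : ς₂ * ς₁ = τ)
    (σ : Equiv.Perm ℕ) (hσ : σ = theta d * ς₁ * shift d ς₂)
    (σs : ℕ → Equiv.Perm ℕ) (hσs : ∀ s, σs s = shift ((s - 1) * d) σ)
    (B T A : Subgroup (Equiv.Perm ℕ))
    (hB : B = Subgroup.closure {x | ∃ s, 1 ≤ s ∧ s ≤ n - 1 ∧ x = σs s})
    (hT : T = Subgroup.closure {x | ∃ k < n, x ∈ Subgroup.zpowers (shift (k * d) τ)})
    (hA : A = B ⊓ T)
    (hq : 3 ≤ orderOf τ) :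
    ∀ g ∈ B, (∀ a ∈ A, g * a * g⁻¹ = a) → g ∈ A := by
  intro g hgB hgA
  have : NeZero d := ⟨by omega⟩
  obtain ⟨s₁, rfl⟩ : ∃ s : fixingFrom d, (s : Perm ℕ) = ς₁ := ⟨⟨ς₁, mem_fixingFrom.2 h₁⟩, rfl⟩
  obtain ⟨s₂, rfl⟩ : ∃ s : fixingFrom d, (s : Perm ℕ) = ς₂ := ⟨⟨ς₂, mem_fixingFrom.2 h₂⟩, rfl⟩
  have hs : Commute s₁ s₂ := Subtype.ext (hτ.trans hτ'.symm)
  have hsq : (s₁ * s₂) ^ 2 ≠ 1 := fun h => pow_ne_one_of_lt_orderOf (x := τ) two_ne_zero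
    (by omega) (by rw [← hτ, ← coe_mul, ← coe_pow, h, coe_one])
  rw [← coe_mul] at hτ
  simp only [hσs] at hB
  subst hτ hσ hB hT hA
  obtain ⟨a, ha, w, hw, rfl⟩ := exists_eq_conj_of_mem_closure_sigmaGens hs hgB
  obtain rfl : w = 1 := by
    ext j
    by_cases hj : j < n
    · exact eq_of_semiconjBy_shift hsq (semiconjBy_conj_shift hs ha w j)
        (hgA _ ⟨shift_sq_mem_closure hs hn hj, pow_mem (shift_mem_blockTorus _ hj) 2⟩)
    · exact mem_fixingFrom.1 hw j (by omega)
  refine ⟨hgB, ?_⟩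
  have hc := commute_of_mem_blockTorus (fun k _ => commute_blockDiag_pow_shift hs k) ha
  rwa [map_one, mul_one, hc.eq, mul_inv_cancel_right]
end
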